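/- arXiv:1801.09821 — 3 statements merged into one kernel-verified Lean document; each statement's English description precedes it below -/
import Mathlib

section
/- For each time step t, the loss ℓ_t = Σ_{i≤j} σ(i,j)(b̂_t(i,j) - b(i,j))(δ_t(i)y_t(j) + δ_t(j)y_t(i)) is non-negative, where δ_t = ŝ_t - s_t, ŝ_t = μ(y_t; b̂_t) and s_t = μ(y_t; b). -/
/-!
The objective is bilinear in the parameters and the schedule, so the loss splits as
`(pcsObj b̂ ŝ - pcsObj b̂ s) + (pcsObj b s - pcsObj b ŝ)`; each bracket is nonnegative because
`ŝ` is optimal for `b̂` and `s` is optimal for `b`.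
-/

open Finset

/-- The PCS objective: `∑_{i ≤ j} σ(i,j) c(i,j) (s(i) y(j) + s(j) y(i))`,
where `σ(i,j) = 1` if `i = j` and `-1` otherwise. -/
noncomputable def pcsObj {n : ℕ} (c : Fin n → Fin n → ℝ) (y : Fin n → ℝ)
    (s : Fin n → ℝ) : ℝ :=
  ∑ i : Fin n, ∑ j : Fin n, if i ≤ j then
    (if i = j then (1 : ℝ) else -1) * c i j * (s i * y j + s j * y i) else 0

theorem pcsObj_sub_left {n : ℕ} (c c' : Fin n → Fin n → ℝ) (y s : Fin n → ℝ) :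
    pcsObj (c - c') y s = pcsObj c y s - pcsObj c' y s := by
  simp only [pcsObj, Pi.sub_apply, ← sum_sub_distrib]
  refine sum_congr rfl fun i _ => sum_congr rfl fun j _ => ?_
  split_ifs <;> ring

theorem pcsObj_sub_right {n : ℕ} (c : Fin n → Fin n → ℝ) (y s s' : Fin n → ℝ) :
    pcsObj c y (fun i => s i - s' i) = pcsObj c y s - pcsObj c y s' := by
  simp only [pcsObj, ← sum_sub_distrib]
  refine sum_congr rfl fun i _ => sum_congr rfl fun j _ => ?_
  split_ifs <;> ring

theorem stmt0_general {n : ℕ} (S : Finset (Fin n → ℕ))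
    (y : Fin n → ℝ)
    (b bhat : Fin n → Fin n → ℝ)
    (st sht : Fin n → ℕ) (hst : st ∈ S) (hsht : sht ∈ S)
    (hstOpt : ∀ s ∈ S,
      pcsObj b y (fun i => (s i : ℝ)) ≤ pcsObj b y (fun i => (st i : ℝ)))
    (hshtOpt : ∀ s ∈ S,
      pcsObj bhat y (fun i => (s i : ℝ)) ≤ pcsObj bhat y (fun i => (sht i : ℝ))) :
    0 ≤ ∑ i : Fin n, ∑ j : Fin n, if i ≤ j then
      (if i = j then (1 : ℝ) else -1) * (bhat i j - b i j) *
        ((((sht i : ℝ) - st i)) * y j + (((sht j : ℝ) - st j)) * y i) else 0 := by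
  change 0 ≤ pcsObj (bhat - b) y (fun i => (sht i : ℝ) - st i)
  rw [pcsObj_sub_left, pcsObj_sub_right, pcsObj_sub_right]
  linarith [hstOpt sht hsht, hshtOpt st hst]

/-- the loss ℓ_t is non-negative. -/
theorem stmt0 {n : ℕ} (hn : 1 ≤ n) (S : Finset (Fin n → ℕ)) (hS : S.Nonempty)
    (y : Fin n → ℝ) (hy : ∀ i, 0 ≤ y i)
    (b bhat : Fin n → Fin n → ℝ)
    (st sht : Fin n → ℕ) (hst : st ∈ S) (hsht : sht ∈ S)
    (hstOpt : ∀ s ∈ S,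
      pcsObj b y (fun i => (s i : ℝ)) ≤ pcsObj b y (fun i => (st i : ℝ)))
    (hshtOpt : ∀ s ∈ S,
      pcsObj bhat y (fun i => (s i : ℝ)) ≤ pcsObj bhat y (fun i => (sht i : ℝ))) :
    0 ≤ ∑ i : Fin n, ∑ j : Fin n, if i ≤ j then
      (if i = j then (1 : ℝ) else -1) * (bhat i j - b i j) *
        ((((sht i : ℝ) - st i)) * y j + (((sht j : ℝ) - st j)) * y i) else 0 :=
  stmt0_general S y b bhat st sht hst hsht hstOpt hshtOpt
end

section
/- The loss ℓ_t decomposes as the sum of two nonnegative terms: ℓ_t = [Σ_{i≤j} σ(i,j) b̂_t(i,j)(δ_t(i)y_t(j)+δ_t(j)y_t(i))] + [Σ_{i≤j} σ(i,j) b(i,j)(−δ_t(i)y_t(j)−δ_t(j)y_t(i))], where the first term is nonnegative by optimality of ŝ_t under b̂_t and the second by optimality of s_t under b. -/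
/-
The PCS objective `pcsObj c y s` is linear in the coefficients `c` and in the assignment `s`.
Hence `ℓ_t = pcsObj (b̂ - b) y δ = pcsObj b̂ y δ + pcsObj b y (-δ)`, and by linearity in `s` the two
terms are the optimality gaps `pcsObj b̂ y ŝ - pcsObj b̂ y s` and `pcsObj b y s - pcsObj b y ŝ`,
both nonnegative since `ŝ` maximizes under `b̂` and `s` maximizes under `b`.
-/

open Finset

section Linearity

variable {n : ℕ} (c d : Fin n → Fin n → ℝ) (y u v : Fin n → ℝ)

lemma pcsObj_sub_coeff : pcsObj (c - d) y u = pcsObj c y u - pcsObj d y u := by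
  simp only [pcsObj, ← sum_sub_distrib, Pi.sub_apply]
  refine sum_congr rfl fun i _ => sum_congr rfl fun j _ => ?_
  split_ifs <;> ring

lemma pcsObj_sub : pcsObj c y (u - v) = pcsObj c y u - pcsObj c y v := by
  simp only [pcsObj, ← sum_sub_distrib, Pi.sub_apply]
  refine sum_congr rfl fun i _ => sum_congr rfl fun j _ => ?_
  split_ifs <;> ring

lemma pcsObj_neg : pcsObj c y (-u) = -pcsObj c y u := by
  simp only [pcsObj, ← sum_neg_distrib, Pi.neg_apply]
  refine sum_congr rfl fun i _ => sum_congr rfl fun j _ => ?_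
  split_ifs <;> ring

lemma pcsObj_sub_nonneg_of_forall_le {S : Finset (Fin n → ℕ)} {s t : Fin n → ℕ} (hs : s ∈ S)
    (ht : ∀ r ∈ S, pcsObj c y (fun i => (r i : ℝ)) ≤ pcsObj c y (fun i => (t i : ℝ))) :
    0 ≤ pcsObj c y ((fun i => (t i : ℝ)) - fun i => (s i : ℝ)) := by
  rw [pcsObj_sub, sub_nonneg]
  exact ht s hs

end Linearity

theorem stmt14_general {n : ℕ} (S : Finset (Fin n → ℕ))
    (y : Fin n → ℝ)
    (b bhat : Fin n → Fin n → ℝ)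
    (st sht : Fin n → ℕ) (hst : st ∈ S) (hsht : sht ∈ S)
    (hstOpt : ∀ s ∈ S,
      pcsObj b y (fun i => (s i : ℝ)) ≤ pcsObj b y (fun i => (st i : ℝ)))
    (hshtOpt : ∀ s ∈ S,
      pcsObj bhat y (fun i => (s i : ℝ)) ≤ pcsObj bhat y (fun i => (sht i : ℝ)))
    (δ : Fin n → ℝ) (hδ : ∀ i, δ i = (sht i : ℝ) - (st i : ℝ)) :
    ((∑ i : Fin n, ∑ j : Fin n, if i ≤ j then
        (if i = j then (1 : ℝ) else -1) * (bhat i j - b i j) *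
          (δ i * y j + δ j * y i) else 0) =
      (∑ i : Fin n, ∑ j : Fin n, if i ≤ j then
        (if i = j then (1 : ℝ) else -1) * bhat i j *
          (δ i * y j + δ j * y i) else 0) +
      (∑ i : Fin n, ∑ j : Fin n, if i ≤ j then
        (if i = j then (1 : ℝ) else -1) * b i j *
          (-(δ i) * y j + -(δ j) * y i) else 0)) ∧
    (0 ≤ ∑ i : Fin n, ∑ j : Fin n, if i ≤ j then
        (if i = j then (1 : ℝ) else -1) * bhat i j *
          (δ i * y j + δ j * y i) else 0) ∧
    (0 ≤ ∑ i : Fin n, ∑ j : Fin n, if i ≤ j then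
        (if i = j then (1 : ℝ) else -1) * b i j *
          (-(δ i) * y j + -(δ j) * y i) else 0) := by
  change pcsObj (bhat - b) y δ = pcsObj bhat y δ + pcsObj b y (-δ) ∧
    0 ≤ pcsObj bhat y δ ∧ 0 ≤ pcsObj b y (-δ)
  have hδ_fun : δ = (fun i => (sht i : ℝ)) - fun i => (st i : ℝ) := funext hδ
  have hnegδ : -δ = (fun i => (st i : ℝ)) - fun i => (sht i : ℝ) := by rw [hδ_fun, neg_sub]
  refine ⟨?_, ?_, ?_⟩
  · rw [pcsObj_sub_coeff, pcsObj_neg, sub_eq_add_neg]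
  · rw [hδ_fun]
    exact pcsObj_sub_nonneg_of_forall_le bhat y hst hshtOpt
  · rw [hnegδ]
    exact pcsObj_sub_nonneg_of_forall_le b y hsht hstOpt

/-- the loss ℓ_t decomposes as the sum of two nonnegative terms,
the first nonnegative by optimality of `ŝ_t` under `b̂_t`, the second by
optimality of `s_t` under `b`. -/
theorem stmt14 {n : ℕ} (hn : 1 ≤ n) (S : Finset (Fin n → ℕ)) (hS : S.Nonempty)
    (y : Fin n → ℝ) (hy : ∀ i, 0 ≤ y i)
    (b bhat : Fin n → Fin n → ℝ)
    (st sht : Fin n → ℕ) (hst : st ∈ S) (hsht : sht ∈ S)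
    (hstOpt : ∀ s ∈ S,
      pcsObj b y (fun i => (s i : ℝ)) ≤ pcsObj b y (fun i => (st i : ℝ)))
    (hshtOpt : ∀ s ∈ S,
      pcsObj bhat y (fun i => (s i : ℝ)) ≤ pcsObj bhat y (fun i => (sht i : ℝ)))
    (δ : Fin n → ℝ) (hδ : ∀ i, δ i = (sht i : ℝ) - (st i : ℝ)) :
    ((∑ i : Fin n, ∑ j : Fin n, if i ≤ j then
        (if i = j then (1 : ℝ) else -1) * (bhat i j - b i j) *
          (δ i * y j + δ j * y i) else 0) =
      (∑ i : Fin n, ∑ j : Fin n, if i ≤ j then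
        (if i = j then (1 : ℝ) else -1) * bhat i j *
          (δ i * y j + δ j * y i) else 0) +
      (∑ i : Fin n, ∑ j : Fin n, if i ≤ j then
        (if i = j then (1 : ℝ) else -1) * b i j *
          (-(δ i) * y j + -(δ j) * y i) else 0)) ∧
    (0 ≤ ∑ i : Fin n, ∑ j : Fin n, if i ≤ j then
        (if i = j then (1 : ℝ) else -1) * bhat i j *
          (δ i * y j + δ j * y i) else 0) ∧
    (0 ≤ ∑ i : Fin n, ∑ j : Fin n, if i ≤ j then
        (if i = j then (1 : ℝ) else -1) * b i j *
          (-(δ i) * y j + -(δ j) * y i) else 0) :=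
  stmt14_general S y b bhat st sht hst hsht hstOpt hshtOpt δ hδ
end

section
/- For the MWU distribution sequence with m_t(k) = σ-signed normalized losses bounded in [−1,1], ⟨m_t, b̂_t⟩ ≥ 0 for every t whenever m_t is derived from z_t = δ_t/‖δ_t‖_∞ with ŝ_t optimal for b̂_t; i.e., Σ_{i≤j} b̂_t(i,j) σ(i,j)(z_t(i)y_t(j) + z_t(j)y_t(i)) ≥ 0. -/
open Finset

/-- `⟨m_t, b̂_t⟩ ≥ 0` whenever `m_t` is derived from
`z_t = δ_t / ‖δ_t‖_∞` with `ŝ_t` optimal for `b̂_t`. -/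
theorem stmt18 {n : ℕ} (hn : 1 ≤ n) (S : Finset (Fin n → ℕ)) (hS : S.Nonempty)
    (y : Fin n → ℝ) (hy : ∀ i, 0 ≤ y i)
    (bhat : Fin n → Fin n → ℝ) (hbhat : ∀ i j, 0 ≤ bhat i j)
    (st sht : Fin n → ℕ) (hst : st ∈ S) (hsht : sht ∈ S)
    (hshtOpt : ∀ s ∈ S,
      pcsObj bhat y (fun i => (s i : ℝ)) ≤ pcsObj bhat y (fun i => (sht i : ℝ)))
    (δ : Fin n → ℝ) (hδ : ∀ i, δ i = (sht i : ℝ) - (st i : ℝ)) (hδ0 : δ ≠ 0)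
    (z : Fin n → ℝ) (hz : ∀ i, z i = δ i / ⨆ k, |δ k|) :
    0 ≤ ∑ i : Fin n, ∑ j : Fin n, if i ≤ j then
      bhat i j * (if i = j then (1 : ℝ) else -1) *
        (z i * y j + z j * y i) else 0 := by
  have : NeZero n := ⟨Nat.one_le_iff_ne_zero.mp hn⟩
  set M : ℝ := ⨆ k, |δ k| with hMdef
  obtain ⟨i0, hi0⟩ : ∃ i, δ i ≠ 0 := by
    by_contra h
    push_neg at h
    exact hδ0 (funext h)
  have hM : 0 < M := by
    have hb : BddAbove (Set.range fun k => |δ k|) := Set.Finite.bddAbove (Set.finite_range _)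
    have := le_ciSup hb i0
    have h0 : 0 < |δ i0| := abs_pos.mpr hi0
    linarith
  have key : (∑ i : Fin n, ∑ j : Fin n, if i ≤ j then
      bhat i j * (if i = j then (1 : ℝ) else -1) *
        (z i * y j + z j * y i) else 0)
      = (pcsObj bhat y (fun i => (sht i : ℝ)) - pcsObj bhat y (fun i => (st i : ℝ))) / M := by
    unfold pcsObj
    rw [← Finset.sum_sub_distrib, Finset.sum_div]
    refine Finset.sum_congr rfl fun i _ => ?_
    rw [← Finset.sum_sub_distrib, Finset.sum_div]
    refine Finset.sum_congr rfl fun j _ => ?_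
    by_cases hij : i ≤ j
    · simp only [hij, if_true, hz, hδ]
      field_simp
      ring
    · simp [hij]
  rw [key]
  apply div_nonneg _ hM.le
  linarith [hshtOpt _ hst]
end
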